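/- Let 𝒩 = ⟨ℕ, <⟩ with the standard strict order and let 𝒜 = ⟨A, <^𝒜⟩ be any elementary extension of 𝒩 not isomorphic to 𝒩. Let φ* be the sentence ∃x∃y(x < x ∧ x < y ∧ ¬(y < y)). Then 𝒩^ue ⊭ φ* while 𝒜^ue ⊨ φ*; consequently 𝒩^ue is not an elementary substructure of 𝒜^ue (elementary substructures do not transfer to ultrafilter extensions). -/

import Mathlib

open FirstOrder Cardinal

namespace UEx

/-- Elements of infinite in- or out-degree. -/
def RInf (R : A → A → Prop) : Set A :=
  {w | {v | R w v}.Infinite ∨ {v | R v w}.Infinite}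

/-- A uniform finite bound on all in- and out-degrees. -/
def Bounded (R : A → A → Prop) : Prop :=
  ∃ n : ℕ, ∀ w : A, {v | R w v}.Finite ∧ {v | R v w}.Finite ∧
    {v | R w v}.ncard ≤ n ∧ {v | R v w}.ncard ≤ n

/-- Almost bounded: finitely many elements of infinite degree, and a uniform
finite bound on the degrees of the remaining elements. -/
def AlmostBounded (R : A → A → Prop) : Prop :=
  (RInf R).Finite ∧ ∃ n : ℕ, ∀ w ∉ RInf R,
    {v | R w v}.ncard ≤ n ∧ {v | R v w}.ncard ≤ n

/-- P = {(s,t) ∈ R : s ∈ R∞ or t ∈ R∞}. -/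
def PRel (R : A → A → Prop) (s t : A) : Prop := R s t ∧ (s ∈ RInf R ∨ t ∈ RInf R)

/-- S = R \ P. -/
def SRel (R : A → A → Prop) (s t : A) : Prop := R s t ∧ ¬(s ∈ RInf R ∨ t ∈ RInf R)

/-- The ultrafilter extension of a binary relation. -/
def ueRel (Q : A → A → Prop) (u v : Ultrafilter A) : Prop :=
  ∀ X ∈ v, {w | ∃ s ∈ X, Q w s} ∈ u

/-- A first-order language with constant symbols indexed by `Consts` and binary
relation symbols indexed by `Rels`. -/
def Lang (Consts Rels : Type*) : Language :=
  ⟨fun n => match n with | 0 => Consts | _ + 1 => PEmpty,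
   fun n => match n with | 2 => Rels | _ => PEmpty⟩

/-- A structure for `Lang Consts Rels` from interpretations of the constants and
the binary relations. -/
def mkStruct {Consts Rels B : Type*} (cs : Consts → B) (rs : Rels → B → B → Prop) :
    (Lang Consts Rels).Structure B where
  funMap {n} f _x :=
    match n, f with
    | 0, c => cs c
    | _ + 1, f => PEmpty.elim f
  RelMap {n} r x :=
    match n, r with
    | 0, r => PEmpty.elim r
    | 1, r => PEmpty.elim r
    | 2, r => rs r (x 0) (x 1)
    | _ + 3, r => PEmpty.elim r

/-- The language with a single binary relation symbol. -/
abbrev L2 : Language := Lang Empty Unit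

/-- The structure on `B` in the language of a single binary relation symbol,
interpreted by `Q`. -/
def struct2 {B : Type*} (Q : B → B → Prop) : L2.Structure B :=
  mkStruct Empty.elim fun _ => Q

/-- The atomic formula `t₁ < t₂` in the language with a single binary relation symbol. -/
def relF {α : Type*} {n : ℕ} (t₁ t₂ : L2.Term (α ⊕ Fin n)) : L2.BoundedFormula α n :=
  Language.BoundedFormula.rel (l := 2) Unit.unit ![t₁, t₂]

/-- The sentence `φ* = ∃x∃y (x < x ∧ x < y ∧ ¬ y < y)`. -/
def phiStar : L2.Sentence :=
  ((relF (&0) (&0) ⊓ relF (&0) (&1) ⊓ (relF (&1) (&1)).not).ex).ex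

lemma relMap_struct2 {B : Type*} (Q : B → B → Prop) (r : Unit) (x : Fin 2 → B) :
    @Language.Structure.RelMap L2 B (struct2 Q) 2 r x ↔ Q (x 0) (x 1) := Iff.rfl

lemma realize_phiStar {B : Type*} (Q : B → B → Prop) :
    @Language.Sentence.Realize L2 B (struct2 Q) phiStar ↔
      ∃ x y, Q x x ∧ Q x y ∧ ¬ Q y y := by
  letI := struct2 (B := B) Q
  simp [phiStar, relF, Language.Sentence.Realize, Language.Formula.Realize,
    Language.BoundedFormula.realize_ex, Language.BoundedFormula.realize_inf,
    Language.BoundedFormula.realize_not, Language.BoundedFormula.Realize,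
    Language.Term.realize, relMap_struct2, struct2, mkStruct, Fin.snoc]

/-- `v0 < v1`. -/
def F2 : L2.Formula (Fin 2) :=
  relF (Language.var (Sum.inl 0)) (Language.var (Sum.inl 1))

/-- `∀x ¬ x < x`. -/
def irreflF : L2.Formula (Fin 0) := (relF (&0) (&0)).not.all

/-- `∀x∀y (x<y ∨ x=y ∨ y<x)`. -/
def trichF : L2.Formula (Fin 0) :=
  ((relF (&0) (&1) ⊔ Language.Term.bdEqual (&0) (&1)) ⊔ relF (&1) (&0)).all.all

/-- `∀y ¬ y < v0`. -/
def zeroF : L2.Formula (Fin 1) :=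
  ((relF (&0) (Language.var (Sum.inl 0))).not).all

/-- `∀y (y < v1 → (y < v0 ∨ y = v0))`. -/
def stepF : L2.Formula (Fin 2) :=
  ((relF (&0) (Language.var (Sum.inl 1))).imp
    (relF (&0) (Language.var (Sum.inl 0)) ⊔
      Language.Term.bdEqual (&0) (Language.var (Sum.inl 0)))).all

section RealizeLemmas
variable {B : Type*} (Q : B → B → Prop)

lemma realize_F2 (x : Fin 2 → B) :
    @Language.Formula.Realize L2 B (struct2 Q) _ F2 x ↔ Q (x 0) (x 1) := by
  letI := struct2 (B := B) Q
  simp [F2, relF, Language.Formula.Realize, Language.BoundedFormula.Realize,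
    Language.Term.realize, relMap_struct2, struct2, mkStruct]

lemma realize_irreflF (x : Fin 0 → B) :
    @Language.Formula.Realize L2 B (struct2 Q) _ irreflF x ↔ ∀ b, ¬ Q b b := by
  letI := struct2 (B := B) Q
  simp [irreflF, relF, Language.Formula.Realize, Language.BoundedFormula.Realize,
    Language.Term.realize, relMap_struct2, struct2, mkStruct, Fin.snoc]

lemma realize_trichF (x : Fin 0 → B) :
    @Language.Formula.Realize L2 B (struct2 Q) _ trichF x ↔
      ∀ a b, Q a b ∨ a = b ∨ Q b a := by
  letI := struct2 (B := B) Q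
  simp [trichF, relF, Language.Formula.Realize, Language.BoundedFormula.Realize,
    Language.Term.realize, relMap_struct2, struct2, mkStruct, Fin.snoc, or_assoc]

lemma realize_zeroF (x : Fin 1 → B) :
    @Language.Formula.Realize L2 B (struct2 Q) _ zeroF x ↔ ∀ b, ¬ Q b (x 0) := by
  letI := struct2 (B := B) Q
  simp [zeroF, relF, Language.Formula.Realize, Language.BoundedFormula.Realize,
    Language.Term.realize, relMap_struct2, struct2, mkStruct, Fin.snoc]

lemma realize_stepF (x : Fin 2 → B) :
    @Language.Formula.Realize L2 B (struct2 Q) _ stepF x ↔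
      ∀ b, Q b (x 1) → Q b (x 0) ∨ b = x 0 := by
  letI := struct2 (B := B) Q
  simp [stepF, relF, Language.Formula.Realize, Language.BoundedFormula.Realize,
    Language.Term.realize, relMap_struct2, struct2, mkStruct, Fin.snoc]

end RealizeLemmas


/-- Elementary substructures do not transfer to ultrafilter extensions: if `𝒜` is a
proper (non-isomorphic) elementary extension of `𝒩 = ⟨ℕ,<⟩`, then
`𝒩^ue ⊭ φ*` while `𝒜^ue ⊨ φ*`; consequently there is no elementary embedding of
`𝒩^ue` into `𝒜^ue`. -/
theorem elementary_not_transfer {A : Type*} (lt : A → A → Prop) (j : ℕ → A)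
    (helem : ∀ (k : ℕ) (φ : L2.Formula (Fin k)) (x : Fin k → ℕ),
      @Language.Formula.Realize L2 A (struct2 lt) _ φ (fun i => j (x i)) ↔
      @Language.Formula.Realize L2 ℕ (struct2 (· < · : ℕ → ℕ → Prop)) _ φ x)
    (hniso : ¬∃ e : ℕ ≃ A, ∀ m n : ℕ, m < n ↔ lt (e m) (e n)) :
    ¬@Language.Sentence.Realize L2 (Ultrafilter ℕ)
        (struct2 (ueRel (· < · : ℕ → ℕ → Prop))) phiStar ∧
    @Language.Sentence.Realize L2 (Ultrafilter A) (struct2 (ueRel lt)) phiStar ∧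
    ¬∃ g : Ultrafilter ℕ → Ultrafilter A,
      ∀ (k : ℕ) (φ : L2.Formula (Fin k)) (x : Fin k → Ultrafilter ℕ),
        @Language.Formula.Realize L2 (Ultrafilter A) (struct2 (ueRel lt)) _ φ
          (fun i => g (x i)) ↔
        @Language.Formula.Realize L2 (Ultrafilter ℕ)
          (struct2 (ueRel (· < · : ℕ → ℕ → Prop))) _ φ x := by
  -- transferred first-order facts
  have hF2 : ∀ m n : ℕ, lt (j m) (j n) ↔ m < n := by
    intro m n
    have h := helem 2 F2 ![m, n]
    rw [realize_F2, realize_F2] at h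
    simpa using h
  have hirr : ∀ b : A, ¬ lt b b := by
    have h := helem 0 irreflF default
    rw [realize_irreflF, realize_irreflF] at h
    exact h.mpr fun b => Nat.lt_irrefl b
  have htrich : ∀ a b : A, lt a b ∨ a = b ∨ lt b a := by
    have h := helem 0 trichF default
    rw [realize_trichF, realize_trichF] at h
    exact h.mpr fun a b => by omega
  have hzero : ∀ b : A, ¬ lt b (j 0) := by
    intro b
    have h := helem 1 zeroF ![0]
    rw [realize_zeroF, realize_zeroF] at h
    have h2 := h.mpr fun c => Nat.not_lt_zero c
    simpa using h2 b
  have hstep : ∀ (n : ℕ) (b : A), lt b (j (n + 1)) → lt b (j n) ∨ b = j n := by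
    intro n b hb
    have h := helem 2 stepF ![n, n + 1]
    rw [realize_stepF, realize_stepF] at h
    have h2 := h.mpr (by intro c hc; simp at hc ⊢; omega)
    simpa using h2 b (by simpa using hb)
  have hbelow : ∀ (n : ℕ) (b : A), lt b (j n) → ∃ m, b = j m := by
    intro n
    induction n with
    | zero => exact fun b hb => absurd hb (hzero b)
    | succ n ih =>
      intro b hb
      rcases hstep n b hb with h | h
      · exact ih b h
      · exact ⟨n, h⟩
  have hinj : Function.Injective j := by
    intro m n hmn
    by_contra hne
    rcases lt_trichotomy m n with h | h | h
    · have := (hF2 m n).mpr h; rw [hmn] at this; exact hirr _ this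
    · exact hne h
    · have := (hF2 n m).mpr h; rw [hmn] at this; exact hirr _ this
  have hex : ∃ a : A, ∀ n, lt (j n) a := by
    by_contra hcon
    push_neg at hcon
    apply hniso
    have hsurj : Function.Surjective j := by
      intro a
      obtain ⟨n, hn⟩ := hcon a
      rcases htrich (j n) a with h1 | h1 | h1
      · exact absurd h1 hn
      · exact ⟨n, h1⟩
      · obtain ⟨m, hm⟩ := hbelow n a h1
        exact ⟨m, hm.symm⟩
    exact ⟨Equiv.ofBijective j ⟨hinj, hsurj⟩, fun m n => (hF2 m n).symm⟩
  obtain ⟨a, ha⟩ := hex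
  -- Part 1
  have part1 : ¬@Language.Sentence.Realize L2 (Ultrafilter ℕ)
      (struct2 (ueRel (· < · : ℕ → ℕ → Prop))) phiStar := by
    rw [realize_phiStar]
    rintro ⟨u, v, huu, huv, hvv⟩
    by_cases hfin : ∃ X ∈ v, X.Finite
    · obtain ⟨X, hXv, hXfin⟩ := hfin
      obtain ⟨n, -, rfl⟩ := Ultrafilter.eq_pure_of_finite_mem hXfin hXv
      have h1 : {w : ℕ | ∃ s ∈ ({n} : Set ℕ), w < s} ∈ u := huv {n} (by simp)
      have heq : {w : ℕ | ∃ s ∈ ({n} : Set ℕ), w < s} = Set.Iio n := by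
        ext w; simp [Set.mem_Iio]
      rw [heq] at h1
      obtain ⟨m, hm, rfl⟩ := Ultrafilter.eq_pure_of_finite_mem (Set.finite_Iio n) h1
      have h2 := huu {m} (by simp)
      have h3 : m < m := by simpa using h2
      omega
    · push_neg at hfin
      apply hvv
      intro X hX
      have hXinf : X.Infinite := hfin X hX
      have heq : {w : ℕ | ∃ s ∈ X, w < s} = Set.univ := by
        ext w
        simp only [Set.mem_univ, iff_true, Set.mem_setOf_eq]
        by_contra hc
        push_neg at hc
        exact hXinf (Set.Finite.subset (Set.finite_Iic w) fun s hs => hc s hs)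
      rw [heq]
      exact Filter.univ_mem
  -- Part 2
  have part2 : @Language.Sentence.Realize L2 (Ultrafilter A)
      (struct2 (ueRel lt)) phiStar := by
    rw [realize_phiStar]
    refine ⟨Ultrafilter.map j (Filter.hyperfilter ℕ), pure a, ?_, ?_, ?_⟩
    · intro X hX
      rw [Ultrafilter.mem_map] at hX ⊢
      have hinf : (j ⁻¹' X).Infinite := by
        by_contra hf
        rw [Set.not_infinite] at hf
        exact hf.notMem_hyperfilter hX
      have heq : j ⁻¹' {w | ∃ s ∈ X, lt w s} = Set.univ := by
        ext m
        simp only [Set.mem_univ, iff_true, Set.mem_preimage, Set.mem_setOf_eq]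
        obtain ⟨k, hk, hmk⟩ : ∃ k ∈ j ⁻¹' X, m < k := by
          by_contra hc
          push_neg at hc
          exact hinf (Set.Finite.subset (Set.finite_Iic m) fun k hk =>
            hc k hk)
        exact ⟨j k, hk, (hF2 m k).mpr hmk⟩
      rw [heq]
      exact Filter.univ_mem
    · intro X hX
      rw [Ultrafilter.mem_pure] at hX
      rw [Ultrafilter.mem_map]
      refine Filter.mem_of_superset Filter.univ_mem fun m _ => ?_
      exact ⟨a, hX, ha m⟩
    · intro hcon
      have h1 := hcon {a} (by simp)
      rw [Ultrafilter.mem_pure] at h1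
      obtain ⟨s, hs, hlt⟩ := h1
      rw [Set.mem_singleton_iff] at hs
      subst hs
      exact hirr _ hlt
  refine ⟨part1, part2, ?_⟩
  rintro ⟨g, hg⟩
  letI : L2.Structure (Ultrafilter A) := struct2 (ueRel lt)
  letI : L2.Structure (Ultrafilter ℕ) := struct2 (ueRel (· < · : ℕ → ℕ → Prop))
  have h := hg 0 (phiStar.relabel fun e => Empty.elim e) default
  rw [Language.Formula.realize_relabel, Language.Formula.realize_relabel] at h
  rw [show ((fun i : Fin 0 => g ((default : Fin 0 → Ultrafilter ℕ) i)) ∘ fun e : Empty => Empty.elim e) =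
      (default : Empty → Ultrafilter A) from Subsingleton.elim _ _] at h
  rw [show ((default : Fin 0 → Ultrafilter ℕ) ∘ fun e : Empty => Empty.elim e) =
      (default : Empty → Ultrafilter ℕ) from Subsingleton.elim _ _] at h
  exact part1 (h.mp part2)


end UEx
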